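/- arXiv:1403.3126 — 2 statements merged into one kernel-verified Lean document; each statement's English description precedes it below -/
import Mathlib

section
/- In the two-sensor counterexample, the non-threshold strategy outperforms both two-threshold strategies: for all real K with 1 < K < 2 and r with 0 < r < 2/3, one has K + 2(1−r) + r(K+1)/2 < K + min( r + (1−r)(K+1), 2 − r/2 ). -/
theorem signaling_beats_thresholds (K r : ℝ) (hK : 1 < K ∧ K < 2)
    (hr : 0 < r ∧ r < 2 / 3) :
    K + 2 * (1 - r) + r * (K + 1) / 2
      < K + min (r + (1 - r) * (K + 1)) (2 - r / 2) := by
  obtain ⟨hK1, hK2⟩ := hK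
  obtain ⟨hr0, hr2⟩ := hr
  have h : 2 * (1 - r) + r * (K + 1) / 2
      < min (r + (1 - r) * (K + 1)) (2 - r / 2) := by
    rw [lt_min_iff]
    constructor <;> nlinarith
  linarith
end

section
/- Sum over messages of weighted concave continuation values is concave: if for each m in a finite set M we have constants A_m, B_m ≥ 0 and concave V_m : [0,1] → ℝ, and A_m π + B_m(1−π) > 0 whenever the term is nonzero, then π ↦ Σ_{m ∈ M} (A_m π + B_m(1−π)) · V_m(A_m π /(A_m π + B_m(1−π))) is concave on [0,1] (terms with A_m = B_m = 0 taken to be 0). -/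
lemma perspective_concave (A B : ℝ) (hA : 0 ≤ A) (hB : 0 ≤ B)
    (V : ℝ → ℝ) (hV : ConcaveOn ℝ (Set.Icc (0:ℝ) 1) V)
    (hpos : ∀ π ∈ Set.Icc (0:ℝ) 1, 0 < A * π + B * (1 - π)) :
    ConcaveOn ℝ (Set.Icc (0:ℝ) 1)
      (fun π => (A * π + B * (1 - π)) * V (A * π / (A * π + B * (1 - π)))) := by
  refine ⟨convex_Icc 0 1, ?_⟩
  intro x hx y hy a b ha hb hab
  simp only [smul_eq_mul]
  set wx := A * x + B * (1 - x) with hwxdef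
  set wy := A * y + B * (1 - y) with hwydef
  have hwx : 0 < wx := hpos x hx
  have hwy : 0 < wy := hpos y hy
  have hb' : b = 1 - a := by linarith
  have hw : A * (a * x + b * y) + B * (1 - (a * x + b * y)) = a * wx + b * wy := by
    subst hb'; simp only [hwxdef, hwydef]; ring
  set s := a * wx + b * wy with hsdef
  have hs : 0 < s := by
    rcases ha.lt_or_eq with h | h
    · nlinarith [mul_pos h hwx, mul_nonneg hb hwy.le]
    · have hb1 : b = 1 := by linarith
      rw [hsdef, ← h, hb1]; simpa using hwy
  set tx := A * x / wx with htxdef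
  set ty := A * y / wy with htydef
  have htx : tx ∈ Set.Icc (0:ℝ) 1 := by
    constructor
    · exact div_nonneg (mul_nonneg hA hx.1) hwx.le
    · rw [div_le_one hwx]; nlinarith [mul_nonneg hB (by linarith [hx.2] : (0:ℝ) ≤ 1 - x)]
  have hty : ty ∈ Set.Icc (0:ℝ) 1 := by
    constructor
    · exact div_nonneg (mul_nonneg hA hy.1) hwy.le
    · rw [div_le_one hwy]; nlinarith [mul_nonneg hB (by linarith [hy.2] : (0:ℝ) ≤ 1 - y)]
  have ha' : 0 ≤ a * wx / s := div_nonneg (mul_nonneg ha hwx.le) hs.le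
  have hb'' : 0 ≤ b * wy / s := div_nonneg (mul_nonneg hb hwy.le) hs.le
  have hab' : a * wx / s + b * wy / s = 1 := by field_simp; exact hsdef.symm
  have key := hV.2 htx hty ha' hb'' hab'
  simp only [smul_eq_mul] at key
  have harg : a * wx / s * tx + b * wy / s * ty = A * (a * x + b * y) / s := by
    simp only [htxdef, htydef]
    field_simp
  rw [harg] at key
  rw [hw]
  rw [show A * (a * x + b * y) / (a * wx + b * wy) = A * (a * x + b * y) / s from rfl]
  calc a * (wx * V tx) + b * (wy * V ty)
      = s * (a * wx / s * V tx + b * wy / s * V ty) := by field_simp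
    _ ≤ s * V (A * (a * x + b * y) / s) := by
        exact mul_le_mul_of_nonneg_left key hs.le
    _ = (a * wx + b * wy) * V (A * (a * x + b * y) / s) := rfl

lemma concaveOn_finset_sum {ι : Type*} (t : Finset ι) (f : ι → ℝ → ℝ)
    (h : ∀ i ∈ t, ConcaveOn ℝ (Set.Icc (0:ℝ) 1) (f i)) :
    ConcaveOn ℝ (Set.Icc (0:ℝ) 1) (fun π => ∑ i ∈ t, f i π) := by
  classical
  induction t using Finset.induction with
  | empty => simpa using concaveOn_const 0 (convex_Icc (0:ℝ) 1)
  | @insert j u hju ih =>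
    simp only [Finset.sum_insert hju]
    exact (h j (Finset.mem_insert_self j u)).add
      (ih fun i hi => h i (Finset.mem_insert_of_mem hi))

theorem sum_weighted_update_concave {M : Type*} [Fintype M]
    (A B : M → ℝ) (hA : ∀ m, 0 ≤ A m) (hB : ∀ m, 0 ≤ B m)
    (V : M → ℝ → ℝ) (hV : ∀ m, ConcaveOn ℝ (Set.Icc (0:ℝ) 1) (V m))
    (hpos : ∀ m, (A m = 0 ∧ B m = 0) ∨
      ∀ π ∈ Set.Icc (0:ℝ) 1, 0 < A m * π + B m * (1 - π)) :
    ConcaveOn ℝ (Set.Icc (0:ℝ) 1) (fun π => ∑ m : M,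
      if A m = 0 ∧ B m = 0 then 0
      else (A m * π + B m * (1 - π)) * V m (A m * π / (A m * π + B m * (1 - π)))) := by
  have h : ∀ m : M, ConcaveOn ℝ (Set.Icc (0:ℝ) 1) (fun π =>
      if A m = 0 ∧ B m = 0 then (0:ℝ)
      else (A m * π + B m * (1 - π)) * V m (A m * π / (A m * π + B m * (1 - π)))) := by
    intro m
    by_cases hm : A m = 0 ∧ B m = 0
    · simp only [if_pos hm]
      exact concaveOn_const 0 (convex_Icc 0 1)
    · simp only [if_neg hm]
      exact perspective_concave (A m) (B m) (hA m) (hB m) (V m) (hV m)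
        ((hpos m).resolve_left hm)
  exact concaveOn_finset_sum Finset.univ _ (fun m _ => h m)
end
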